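/- arXiv:2005.10054 — 5 statements merged into one kernel-verified Lean document; each statement's English description precedes it below -/
import Mathlib

section
/- Let (a,p) be a truthful mechanism with finite approximation ratio ρ. If, on cost matrix A1, the mechanism allocates all the proper tasks n+1,…,2n−1 to machine 1, then ρ ≥ 1 + r + ∑_{i=1}^{n-2} a^{-i}. -/
open scoped ENNReal BigOperators

/-- A feasible allocation of `m` tasks to `n` machines: a 0-1 matrix (represented as a
`Bool`-valued matrix) in which every task is assigned to exactly one machine. -/
structure Alloc (n m : ℕ) where
  assign : Fin n → Fin m → Bool
  feasible : ∀ j : Fin m, ∃! i : Fin n, assign i j = true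

/-- The total processing cost incurred by machine `i` under allocation `A`
when her (true) cost row is `ti`. -/
noncomputable def machineCost {n m : ℕ} (A : Alloc n m) (ti : Fin m → ℝ≥0∞) (i : Fin n) :
    ℝ≥0∞ :=
  ∑ j : Fin m, if A.assign i j then ti j else 0

/-- A deterministic (direct-revelation) mechanism: an allocation rule together with a
payment rule. -/
structure Mechanism (n m : ℕ) where
  alloc : (Fin n → Fin m → ℝ≥0∞) → Alloc n m
  pay : (Fin n → Fin m → ℝ≥0∞) → Fin n → ℝ

/-- The (quasi-linear) utility of machine `i` when the reported cost matrix is `t` and her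
true cost row is `trueRow`: her payment minus her incurred true cost, in the extended reals. -/
noncomputable def utility {n m : ℕ} (M : Mechanism n m) (t : Fin n → Fin m → ℝ≥0∞)
    (trueRow : Fin m → ℝ≥0∞) (i : Fin n) : EReal :=
  (M.pay t i : EReal) - ((machineCost (M.alloc t) trueRow i : ℝ≥0∞) : EReal)

/-- Truthfulness: no machine can strictly increase her utility by misreporting her row,
whatever the (fixed) reports of the other machines are. -/
def Truthful {n m : ℕ} (M : Mechanism n m) : Prop :=
  ∀ (t : Fin n → Fin m → ℝ≥0∞) (i : Fin n) (ti' : Fin m → ℝ≥0∞),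
    utility M (Function.update t i ti') (t i) i ≤ utility M t (t i) i

/-- The makespan of allocation `A` on cost matrix `t`. -/
noncomputable def makespan {n m : ℕ} (A : Alloc n m) (t : Fin n → Fin m → ℝ≥0∞) : ℝ≥0∞ :=
  ⨆ i : Fin n, machineCost A (t i) i

/-- The optimal makespan on cost matrix `t`. -/
noncomputable def optMakespan (n m : ℕ) (t : Fin n → Fin m → ℝ≥0∞) : ℝ≥0∞ :=
  ⨅ A : Alloc n m, makespan A t

/-- The mechanism `M` has approximation ratio (at most) `ρ`. -/
def ApproxRatioLE {n m : ℕ} (M : Mechanism n m) (ρ : ℝ) : Prop :=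
  1 ≤ ρ ∧ ∀ t : Fin n → Fin m → ℝ≥0∞,
    makespan (M.alloc t) t ≤ ENNReal.ofReal ρ * optMakespan n m t

/-- The cost matrix `A0` on `n` machines and `2n-1` tasks. Tasks with index `< n` (0-based)
are the dummy tasks: machine `i` has cost `0` on dummy task `i` and `∞` on the other dummy
tasks. Tasks with index `n, n+1, …, 2n-2` (0-based) are the proper tasks `n+1, …, 2n-1` of
the paper: machines `1` and `2` (indices `0`, `1`) have cost `1` on task `n+1` (index `n`)
and cost `a^{-(j-2)}` on task `n+j` (index `n+j-1`) for `j = 2,…,n-1`; machine `i`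
(index `i-1 ≥ 2`), for `3 ≤ i ≤ n`, has cost `a^{-(i-3)}` on task `n+i-1` (index `n+i-2`)
and `∞` on every other proper task. -/
noncomputable def A0 (n : ℕ) (a : ℝ) : Fin n → Fin (2 * n - 1) → ℝ≥0∞ := fun i j =>
  if (j : ℕ) < n then
    (if (j : ℕ) = (i : ℕ) then 0 else ⊤)
  else if (i : ℕ) ≤ 1 then
    (if (j : ℕ) = n then 1 else ENNReal.ofReal (a⁻¹ ^ ((j : ℕ) - n - 1)))
  else
    (if (j : ℕ) = n + (i : ℕ) - 1 then ENNReal.ofReal (a⁻¹ ^ ((j : ℕ) - n - 1)) else ⊤)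

/-- The cost matrix `A1`: identical to `A0` except for machine `1`'s (index `0`'s) costs on
the proper tasks, which become `r` on task `n+1` (index `n`) and `a^{-(j-1)}` on task `n+j`
(index `n+j-1`) for `j = 2,…,n-1`. -/
noncomputable def A1 (n : ℕ) (r a : ℝ) : Fin n → Fin (2 * n - 1) → ℝ≥0∞ := fun i j =>
  if (i : ℕ) = 0 ∧ n ≤ (j : ℕ) then
    (if (j : ℕ) = n then ENNReal.ofReal r else ENNReal.ofReal (a⁻¹ ^ ((j : ℕ) - n)))
  else A0 n a i j

/-! On `A1` machine 1 holds its dummy task (cost `0`) and all proper tasks, of total cost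
`S = r + ∑ a⁻¹ ^ i`. Let it bid `1` on its dummy task and `c * cost` on the proper tasks, with
`c < 1`. The canonical allocation (machine `i ≥ 2` takes its dummy task and task `n + i - 1`)
still has makespan `≤ 1`, and finiteness of the mechanism's makespan pins down who gets the dummy
tasks. Weak monotonicity then says that, since the bid dropped strictly on exactly the proper
tasks, machine 1 keeps proper tasks of total true cost `≥ S`, so its load is `≥ 1 + c * S`, which
the approximation ratio bounds by `ρ`. Letting `c → 1` gives `1 + S ≤ ρ`. -/

open Finset Function

section Allocation

variable {n m : ℕ}

def Alloc.ofFun (f : Fin m → Fin n) : Alloc n m where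
  assign i j := decide (f j = i)
  feasible j := ⟨f j, by simp, fun i h => by simpa [eq_comm] using h⟩

theorem machineCost_ofFun (f : Fin m → Fin n) (row : Fin m → ℝ≥0∞) (i : Fin n) :
    machineCost (Alloc.ofFun f) row i = ∑ j ∈ univ.filter (f · = i), row j := by
  simp [machineCost, Alloc.ofFun, sum_filter]

theorem machineCost_le_makespan (A : Alloc n m) (t : Fin n → Fin m → ℝ≥0∞) (i : Fin n) :
    machineCost A (t i) i ≤ makespan A t :=
  le_iSup (fun k => machineCost A (t k) k) i

theorem le_machineCost_of_assign {A : Alloc n m} {row : Fin m → ℝ≥0∞} {i : Fin n} {j : Fin m}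
    (h : A.assign i j = true) : row j ≤ machineCost A row i :=
  calc row j = if A.assign i j then row j else 0 := by rw [if_pos h]
    _ ≤ machineCost A row i :=
      single_le_sum (f := fun j => if A.assign i j then row j else 0) (fun _ _ => zero_le)
        (mem_univ j)

theorem machineCost_eq_add_sum {A : Alloc n m} {i : Fin n} {d : Fin m} {P : Finset (Fin m)}
    (hdP : d ∉ P) (hd : A.assign i d = true) (hout : ∀ j ∉ P, j ≠ d → A.assign i j = false)
    (row : Fin m → ℝ≥0∞) :
    machineCost A row i = row d + ∑ j ∈ P, if A.assign i j then row j else 0 := by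
  rw [machineCost, ← sum_subset (subset_univ (insert d P)), sum_insert hdP, if_pos hd]
  intro j _ hj
  rw [mem_insert, not_or] at hj
  simp [hout j hj.2 hj.1]

end Allocation

theorem EReal.coe_sub_coe_ennreal_of_ne_top (p : ℝ) {c : ℝ≥0∞} (hc : c ≠ ⊤) :
    (p : EReal) - c = ((p - c.toReal : ℝ) : EReal) := by
  lift c to NNReal using hc
  rfl

section Mechanism

variable {n m : ℕ} {M : Mechanism n m}

theorem Truthful.weak_monotone (hM : Truthful M) (t : Fin n → Fin m → ℝ≥0∞) (i : Fin n)
    (x : Fin m → ℝ≥0∞) :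
    machineCost (M.alloc t) (t i) i + machineCost (M.alloc (update t i x)) x i ≤
      machineCost (M.alloc (update t i x)) (t i) i + machineCost (M.alloc t) x i := by
  set A := M.alloc t
  set B := M.alloc (update t i x)
  -- Summing the two truthfulness constraints cancels the payments once all four costs are finite.
  have hB := hM t i x
  have hA := hM (update t i x) i (t i)
  rw [update_idem, update_eq_self, update_self] at hA
  simp only [utility] at hA hB
  by_cases htop : machineCost B (t i) i = ⊤ ∨ machineCost A x i = ⊤
  · rcases htop with h | h <;> simp [h]
  obtain ⟨hBy, hAx⟩ := not_or.1 htop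
  rw [EReal.coe_sub_coe_ennreal_of_ne_top _ hBy] at hB
  rw [EReal.coe_sub_coe_ennreal_of_ne_top _ hAx] at hA
  have hAy : machineCost A (t i) i ≠ ⊤ := by
    intro h
    rw [h, EReal.coe_ennreal_top, EReal.sub_top] at hB
    exact EReal.coe_ne_bot _ (le_bot_iff.1 hB)
  have hBx : machineCost B x i ≠ ⊤ := by
    intro h
    rw [h, EReal.coe_ennreal_top, EReal.sub_top] at hA
    exact EReal.coe_ne_bot _ (le_bot_iff.1 hA)
  rw [EReal.coe_sub_coe_ennreal_of_ne_top _ hAy, EReal.coe_le_coe_iff] at hB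
  rw [EReal.coe_sub_coe_ennreal_of_ne_top _ hBx, EReal.coe_le_coe_iff] at hA
  rw [← ENNReal.toReal_le_toReal (ENNReal.add_ne_top.2 ⟨hAy, hBx⟩)
    (ENNReal.add_ne_top.2 ⟨hBy, hAx⟩), ENNReal.toReal_add hAy hBx, ENNReal.toReal_add hBy hAx]
  linarith

variable {ρ : ℝ} {t : Fin n → Fin m → ℝ≥0∞}

theorem ApproxRatioLE.machineCost_le (hρ : ApproxRatioLE M ρ) (ht : optMakespan n m t ≤ 1)
    (i : Fin n) : machineCost (M.alloc t) (t i) i ≤ ENNReal.ofReal ρ :=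
  calc machineCost (M.alloc t) (t i) i ≤ makespan (M.alloc t) t := machineCost_le_makespan _ _ _
    _ ≤ ENNReal.ofReal ρ * optMakespan n m t := hρ.2 t
    _ ≤ ENNReal.ofReal ρ := mul_le_of_le_one_right' ht

theorem ApproxRatioLE.assign_eq_false_of_eq_top (hρ : ApproxRatioLE M ρ)
    (ht : optMakespan n m t ≤ 1) {i : Fin n} {j : Fin m} (hij : t i j = ⊤) :
    (M.alloc t).assign i j = false := by
  by_contra h
  have := (le_machineCost_of_assign (Bool.not_eq_false _ ▸ h)).trans (hρ.machineCost_le ht i)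
  rw [hij, top_le_iff] at this
  exact ENNReal.ofReal_ne_top this

theorem ApproxRatioLE.assign_of_forall_ne_eq_top (hρ : ApproxRatioLE M ρ)
    (ht : optMakespan n m t ≤ 1) {i : Fin n} {j : Fin m} (hj : ∀ k ≠ i, t k j = ⊤) :
    (M.alloc t).assign i j = true := by
  obtain ⟨k, hk, -⟩ := (M.alloc t).feasible j
  obtain rfl | hki := eq_or_ne k i
  · exact hk
  · simp [hρ.assign_eq_false_of_eq_top ht (hj k hki)] at hk

theorem ApproxRatioLE.machineCost_eq_add_sum (hρ : ApproxRatioLE M ρ)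
    (ht : optMakespan n m t ≤ 1) {i : Fin n} {d : Fin m} {P : Finset (Fin m)} (hdP : d ∉ P)
    (hd : ∀ k ≠ i, t k d = ⊤) (hout : ∀ j ∉ P, j ≠ d → t i j = ⊤) (row : Fin m → ℝ≥0∞) :
    machineCost (M.alloc t) row i =
      row d + ∑ j ∈ P, if (M.alloc t).assign i j then row j else 0 :=
  _root_.machineCost_eq_add_sum hdP (hρ.assign_of_forall_ne_eq_top ht hd)
    (fun j hj hjd => hρ.assign_eq_false_of_eq_top ht (hout j hj hjd)) row

end Mechanism

theorem ENNReal.le_of_add_mul_le_add_mul {S σ c : ℝ≥0∞} (hS : S ≠ ⊤) (hσS : σ ≤ S) (hc : c < 1)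
    (h : S + c * σ ≤ σ + c * S) : S ≤ σ := by
  have hσ : σ ≠ ⊤ := ne_top_of_le_ne_top hS hσS
  have hc' : c ≠ ⊤ := ne_top_of_lt hc
  rw [← ENNReal.toReal_le_toReal (by finiteness) (by finiteness), ENNReal.toReal_add (by finiteness)
    (by finiteness), ENNReal.toReal_add hσ (by finiteness), ENNReal.toReal_mul,
    ENNReal.toReal_mul] at h
  have hc1 : c.toReal < 1 := by
    simpa using (ENNReal.toReal_lt_toReal hc' ENNReal.one_ne_top).2 hc
  rw [← ENNReal.toReal_le_toReal hS hσ]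
  nlinarith

noncomputable def perturbedRow {m : ℕ} (row : Fin m → ℝ≥0∞) (P : Finset (Fin m)) (d : Fin m)
    (c : ℝ≥0∞) : Fin m → ℝ≥0∞ :=
  fun j => if j ∈ P then c * row j else if j = d then 1 else row j

theorem one_add_sum_le_of_forall_assign {n m : ℕ} {M : Mechanism n m} (hM : Truthful M) {ρ : ℝ}
    (hρ : ApproxRatioLE M ρ) {t : Fin n → Fin m → ℝ≥0∞} {i : Fin n} {d : Fin m}
    {P : Finset (Fin m)} (hdP : d ∉ P) (hd : t i d = 0) (hd_other : ∀ k ≠ i, t k d = ⊤)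
    (hout : ∀ j ∉ P, j ≠ d → t i j = ⊤) (hP : ∀ j ∈ P, t i j ≠ ⊤)
    (hall : ∀ j ∈ P, (M.alloc t).assign i j = true) (hopt : optMakespan n m t ≤ 1)
    (hopt' : ∀ c < 1, optMakespan n m (update t i (perturbedRow (t i) P d c)) ≤ 1) :
    1 + ∑ j ∈ P, t i j ≤ ENNReal.ofReal ρ := by
  refine ENNReal.le_of_forall_lt_one_mul_le fun c hc => ?_
  set x := perturbedRow (t i) P d c
  set A := M.alloc t
  set B := M.alloc (update t i x)
  have hA : ∀ row, machineCost A row i = row d + ∑ j ∈ P, if A.assign i j then row j else 0 :=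
    hρ.machineCost_eq_add_sum hopt hdP hd_other hout
  have hB : ∀ row, machineCost B row i = row d + ∑ j ∈ P, if B.assign i j then row j else 0 :=
    hρ.machineCost_eq_add_sum (hopt' c hc) hdP
      (fun k hk => by rw [update_of_ne hk]; exact hd_other k hk)
      (fun j hj hjd => by simp [perturbedRow, hj, hjd, hout j hj hjd])
  set S := ∑ j ∈ P, t i j
  set σ := ∑ j ∈ P, if B.assign i j then t i j else 0
  have hAy : machineCost A (t i) i = S := by
    rw [hA, hd, zero_add]
    exact sum_congr rfl fun j hj => if_pos (hall j hj)
  have hAx : machineCost A x i = 1 + c * S := by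
    rw [hA, mul_sum]
    congr 1
    · simp [x, perturbedRow, hdP]
    · exact sum_congr rfl fun j hj => by simp [x, perturbedRow, hj, hall j hj]
  have hBy : machineCost B (t i) i = σ := by rw [hB, hd, zero_add]
  have hBx : machineCost B x i = 1 + c * σ := by
    rw [hB, mul_sum]
    congr 1
    · simp [x, perturbedRow, hdP]
    · exact sum_congr rfl fun j hj => by simp [x, perturbedRow, hj, mul_ite]
  have hσS : σ ≤ S := sum_le_sum fun j _ => by split_ifs <;> simp
  have hSσ : S ≤ σ := by
    refine ENNReal.le_of_add_mul_le_add_mul (ENNReal.sum_ne_top.2 hP) hσS hc ?_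
    have := hM.weak_monotone t i x
    rw [hAy, hAx, hBy, hBx, add_left_comm, add_left_comm σ] at this
    exact (ENNReal.add_le_add_iff_left ENNReal.one_ne_top).1 this
  calc c * (1 + S) ≤ 1 + c * S := by
        rw [mul_add, mul_one]; gcongr
    _ ≤ machineCost B x i := by rw [hBx]; gcongr
    _ ≤ ENNReal.ofReal ρ := by
        simpa only [update_self] using hρ.machineCost_le (hopt' c hc) i

section CostMatrixA1

variable {n : ℕ} {r a : ℝ}

theorem A1_dummy_self (i : Fin n) (j : Fin (2 * n - 1)) (hj : (j : ℕ) = i) :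
    A1 n r a i j = 0 := by
  simp [A1, A0, hj]

theorem A1_dummy_ne (i : Fin n) (j : Fin (2 * n - 1)) (hjn : (j : ℕ) < n) (hj : (j : ℕ) ≠ i) :
    A1 n r a i j = ⊤ := by
  simp [A1, A0, hjn, hj]

theorem A1_proper_zero (i : Fin n) (hi : (i : ℕ) = 0) (j : Fin (2 * n - 1)) (hj : n ≤ (j : ℕ)) :
    A1 n r a i j = ENNReal.ofReal (if (j : ℕ) = n then r else a⁻¹ ^ ((j : ℕ) - n)) := by
  simp only [A1, hi, hj, and_self, if_true]
  split_ifs <;> rfl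

theorem A1_proper_diag_le_one (ha : 1 ≤ a) (i : Fin n) (hi : 1 ≤ (i : ℕ)) (j : Fin (2 * n - 1))
    (hj : (j : ℕ) = n + i - 1) : A1 n r a i j ≤ 1 := by
  have hpow : a⁻¹ ^ ((j : ℕ) - n - 1) ≤ 1 :=
    pow_le_one₀ (inv_nonneg.2 (by linarith)) (inv_le_one_of_one_le₀ ha)
  simp only [A1, A0]
  split_ifs <;> first | omega | exact le_rfl | exact ENNReal.ofReal_le_one.2 hpow

def canonicalAssignment (n : ℕ) (j : Fin (2 * n - 1)) : Fin n :=
  if h : (j : ℕ) < n then ⟨j, h⟩ else ⟨j - n + 1, by omega⟩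

theorem val_canonicalAssignment (j : Fin (2 * n - 1)) :
    (canonicalAssignment n j : ℕ) = if (j : ℕ) < n then (j : ℕ) else (j : ℕ) - n + 1 := by
  unfold canonicalAssignment
  split_ifs <;> rfl

theorem optMakespan_le_one_of_eq_A1 (ha : 1 ≤ a) (hn : 0 < n)
    {t : Fin n → Fin (2 * n - 1) → ℝ≥0∞} (ht : ∀ k : Fin n, (k : ℕ) ≠ 0 → t k = A1 n r a k)
    (ht₀ : t ⟨0, hn⟩ ⟨0, by omega⟩ ≤ 1) :
    optMakespan n (2 * n - 1) t ≤ 1 := by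
  refine iInf_le_of_le (Alloc.ofFun (canonicalAssignment n)) (iSup_le fun k => ?_)
  rw [machineCost_ofFun]
  have hk := k.isLt
  have mem_iff (j : Fin (2 * n - 1)) : j ∈ univ.filter (canonicalAssignment n · = k) ↔
      (if (j : ℕ) < n then (j : ℕ) else (j : ℕ) - n + 1) = k := by
    simp [Fin.ext_iff, val_canonicalAssignment]
  by_cases hk₀ : (k : ℕ) = 0
  · obtain rfl : k = ⟨0, hn⟩ := Fin.ext hk₀
    rw [sum_eq_single_of_mem ⟨0, by omega⟩ ((mem_iff _).2 (by simp [hn]))]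
    · exact ht₀
    · intro j hj hj₀
      rw [mem_iff] at hj
      simp only [ne_eq, Fin.ext_iff] at hj₀
      split_ifs at hj
      omega
  · rw [ht k hk₀, sum_eq_single_of_mem ⟨n + k - 1, by omega⟩
      ((mem_iff _).2 (by dsimp only; rw [if_neg (by omega)]; omega))]
    · exact A1_proper_diag_le_one ha k (by omega) _ rfl
    · intro j hj hjk
      rw [mem_iff] at hj
      simp only [ne_eq, Fin.ext_iff] at hjk
      split_ifs at hj
      · exact A1_dummy_self k j hj
      · omega

def properTasks (n : ℕ) : Finset (Fin (2 * n - 1)) :=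
  univ.filter fun j => n ≤ (j : ℕ)

@[simp]
theorem mem_properTasks {j : Fin (2 * n - 1)} : j ∈ properTasks n ↔ n ≤ (j : ℕ) := by
  simp [properTasks]

theorem sum_properTasks_A1 (hn : 2 ≤ n) :
    ∑ j ∈ properTasks n, A1 n r a ⟨0, by omega⟩ j =
      ENNReal.ofReal r + ∑ k ∈ Icc 1 (n - 2), ENNReal.ofReal (a⁻¹ ^ k) := by
  set g : ℕ → ℝ≥0∞ := fun j => if n ≤ j then ENNReal.ofReal (if j = n then r else a⁻¹ ^ (j - n))
    else 0
  calc ∑ j ∈ properTasks n, A1 n r a ⟨0, by omega⟩ j = ∑ j : Fin (2 * n - 1), g j := by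
        rw [properTasks, sum_filter]
        exact sum_congr rfl fun j _ => by
          by_cases hj : n ≤ (j : ℕ) <;> simp [g, hj, A1_proper_zero]
    _ = ∑ j ∈ range (n + (n - 2 + 1)), g j := by
        rw [Fin.sum_univ_eq_sum_range g, show 2 * n - 1 = n + (n - 2 + 1) by omega]
    _ = ENNReal.ofReal r + ∑ k ∈ Icc 1 (n - 2), ENNReal.ofReal (a⁻¹ ^ k) := by
        rw [sum_range_add, sum_range_succ', sum_eq_zero fun j hj => if_neg (by simpa using hj),
          ← Finset.Ico_add_one_right_eq_Icc, sum_Ico_eq_sum_range]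
        simp [g, add_comm]

theorem one_add_sum_properTasks_A1_le (hn : 0 < n) (ha : 1 ≤ a) {M : Mechanism n (2 * n - 1)}
    (hM : Truthful M) {ρ : ℝ} (hρ : ApproxRatioLE M ρ)
    (hall : ∀ j ∈ properTasks n, (M.alloc (A1 n r a)).assign ⟨0, hn⟩ j = true) :
    1 + ∑ j ∈ properTasks n, A1 n r a ⟨0, hn⟩ j ≤ ENNReal.ofReal ρ := by
  refine one_add_sum_le_of_forall_assign hM hρ (d := ⟨0, by omega⟩)
    (by simp [hn.ne']) (A1_dummy_self _ _ rfl)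
    (fun k hk => A1_dummy_ne _ _ (by omega) (Fin.val_ne_of_ne hk.symm))
    (fun j hj hjd => A1_dummy_ne _ _ (by rw [mem_properTasks] at hj; omega)
      (by simpa [Fin.ext_iff] using hjd))
    (fun j hj => by rw [A1_proper_zero _ rfl _ (mem_properTasks.1 hj)]; simp)
    hall (optMakespan_le_one_of_eq_A1 ha hn (fun _ _ => rfl)
      (by rw [A1_dummy_self _ _ rfl]; exact zero_le_one))
    (fun c _ => optMakespan_le_one_of_eq_A1 ha hn
      (fun k hk => update_of_ne (Fin.ne_of_val_ne hk) _ _)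
      (by simp [perturbedRow, mem_properTasks, hn.ne']))

end CostMatrixA1

/-- **Case 1.**  Let `(a,p)` be a truthful mechanism with finite approximation
ratio `ρ`.  If, on cost matrix `A1`, the mechanism allocates all the proper tasks
`n+1,…,2n-1` (0-based indices `n,…,2n-2`) to machine `1` (index `0`), then
`ρ ≥ 1 + r + ∑_{i=1}^{n-2} a^{-i}`. -/
theorem case_one_lower_bound (n : ℕ) (hn : 3 ≤ n) (r a : ℝ)
    (ha : 1 < a)
    (M : Mechanism n (2 * n - 1)) (hM : Truthful M)
    (ρ : ℝ) (hρ : ApproxRatioLE M ρ)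
    (hall : ∀ j : Fin (2 * n - 1), n ≤ (j : ℕ) →
      (M.alloc (A1 n r a)).assign ⟨0, by omega⟩ j = true) :
    1 + r + ∑ i ∈ Finset.Icc 1 (n - 2), a⁻¹ ^ i ≤ ρ := by
  have key := one_add_sum_properTasks_A1_le (r := r) (by omega) ha.le hM hρ
    fun j hj => hall j (mem_properTasks.1 hj)
  rw [sum_properTasks_A1 (by omega), ← add_assoc] at key
  rw [← ENNReal.ofReal_le_ofReal_iff (by linarith [hρ.1])]
  calc ENNReal.ofReal (1 + r + ∑ i ∈ Icc 1 (n - 2), a⁻¹ ^ i)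
      ≤ ENNReal.ofReal 1 + ENNReal.ofReal r + ENNReal.ofReal (∑ i ∈ Icc 1 (n - 2), a⁻¹ ^ i) :=
        ENNReal.ofReal_add_le.trans (by gcongr; exact ENNReal.ofReal_add_le)
    _ = 1 + ENNReal.ofReal r + ∑ k ∈ Icc 1 (n - 2), ENNReal.ofReal (a⁻¹ ^ k) := by
        rw [ENNReal.ofReal_one, ENNReal.ofReal_sum_of_nonneg fun k _ => by positivity]
    _ ≤ ENNReal.ofReal ρ := key
end

section
/- For n ∈ {3,4,5}, the supremum of the optimization problem (NLP_n) equals 1 + a_n, where a_n is the unique positive real solution of the equation 2a^{-1} + ∑_{i=2}^{n-2} a^{-i} = a; moreover this supremum is attained at the feasible point (r, a, ρ) = (a_n^{-1}, a_n, 1 + a_n). -/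
open scoped BigOperators

/-- The feasibility predicate of the optimization problem (NLP_n): real variables
`r, a, ρ` subject to `ρ ≤ 1 + r + ∑_{i=1}^{n-2} a^{-i}`, `ρ ≤ 1 + r⁻¹`, `ρ ≤ 1 + a`,
`0 < r < 1 < a`, and `1 - r > a⁻¹ - a^{-(n-2)}`. -/
def NLPFeasible (n : ℕ) (r a ρ : ℝ) : Prop :=
  ρ ≤ 1 + r + ∑ i ∈ Finset.Icc 1 (n - 2), a⁻¹ ^ i ∧
  ρ ≤ 1 + r⁻¹ ∧
  ρ ≤ 1 + a ∧
  0 < r ∧ r < 1 ∧ 1 < a ∧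
  a⁻¹ - a⁻¹ ^ (n - 2) < 1 - r

/-!
If `ρ > 1 + aₙ` were feasible, then `ρ ≤ 1 + r⁻¹` and `ρ ≤ 1 + a` force `r < aₙ⁻¹` and `a > aₙ`,
so `ρ ≤ 1 + r + ∑ a^{-i} < 1 + aₙ⁻¹ + ∑ aₙ^{-i} = 1 + aₙ`, the last equality being the defining
equation of `aₙ`. This bound holds for every `n`; the restriction to `n ∈ {3, 4, 5}` is needed only to
see that the last constraint holds at `(aₙ⁻¹, aₙ, 1 + aₙ)`: with `x = aₙ⁻¹` it reads
`2x - x^{n-2} < 1`, which for `n = 5` factors as `(1 - x)(1 - x - x²) > 0`.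
-/

theorem sum_Icc_one_pow_eq_add_sum_Icc_two {R : Type*} [Semiring R] {m : ℕ} (hm : 1 ≤ m)
    (x : R) :
    ∑ i ∈ Finset.Icc 1 m, x ^ i = x + ∑ i ∈ Finset.Icc 2 m, x ^ i := by
  rw [← Finset.insert_Icc_add_one_left_eq_Icc hm, Finset.sum_insert (by simp), pow_one,
    one_add_one_eq_two]

theorem one_lt_of_two_mul_inv_add_eq {a s : ℝ} (ha : 0 < a) (hs : 0 ≤ s)
    (h : 2 * a⁻¹ + s = a) : 1 < a := by
  by_contra! hle
  have : 1 ≤ a⁻¹ := one_le_inv_iff₀.mpr ⟨ha, hle⟩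
  linarith

theorem NLPFeasible.le_one_add {n : ℕ} {r a ρ an : ℝ} (h : NLPFeasible n r a ρ) (hpos : 0 < an)
    (hbal : an⁻¹ + ∑ i ∈ Finset.Icc 1 (n - 2), an⁻¹ ^ i = an) : ρ ≤ 1 + an := by
  obtain ⟨h_sum, h_inv, h_a, hr, -, ha, -⟩ := h
  by_contra! hlt
  have hr_lt : r < an⁻¹ := by
    simpa using inv_strictAnti₀ hpos (show an < r⁻¹ by linarith)
  have ha_inv : a⁻¹ < an⁻¹ := inv_strictAnti₀ hpos (by linarith)
  have hsum : ∑ i ∈ Finset.Icc 1 (n - 2), a⁻¹ ^ i ≤ ∑ i ∈ Finset.Icc 1 (n - 2), an⁻¹ ^ i :=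
    Finset.sum_le_sum fun i _ => pow_le_pow_left₀ (inv_pos.mpr (by linarith)).le ha_inv.le i
  linarith

theorem two_mul_sub_pow_three_lt_one {x : ℝ} (hx : 0 < x) (h : 2 * x ^ 2 + x ^ 3 + x ^ 4 = 1) :
    2 * x - x ^ 3 < 1 := by
  have hx1 : x < 1 := by nlinarith
  have hgolden : x + x ^ 2 < 1 := by nlinarith
  nlinarith [mul_pos (sub_pos.mpr hx1) (show 0 < 1 - x - x ^ 2 by linarith)]

theorem two_mul_sub_pow_lt_one {n : ℕ} (hn : n = 3 ∨ n = 4 ∨ n = 5) {x : ℝ} (hx0 : 0 < x)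
    (hx1 : x < 1) (h : 2 * x + ∑ i ∈ Finset.Icc 2 (n - 2), x ^ i = x⁻¹) :
    2 * x - x ^ (n - 2) < 1 := by
  rcases hn with rfl | rfl | rfl
  · change 2 * x - x ^ 1 < 1
    linarith
  · change 2 * x - x ^ 2 < 1
    nlinarith [sq_pos_of_ne_zero (sub_ne_zero.mpr hx1.ne)]
  · change 2 * x + ∑ i ∈ Finset.Icc 2 3, x ^ i = x⁻¹ at h
    rw [Finset.sum_Icc_succ_top (by norm_num), Finset.Icc_self, Finset.sum_singleton] at h
    apply two_mul_sub_pow_three_lt_one hx0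
    field_simp at h
    linear_combination h

theorem nlp_value_small_n_general (n : ℕ) (hn : n = 3 ∨ n = 4 ∨ n = 5)
    (an : ℝ) (hpos : 0 < an)
    (heq : 2 * an⁻¹ + ∑ i ∈ Finset.Icc 2 (n - 2), an⁻¹ ^ i = an) :
    sSup {ρ : ℝ | ∃ r a : ℝ, NLPFeasible n r a ρ} = 1 + an ∧
      NLPFeasible n an⁻¹ an (1 + an) := by
  have hinv : 0 < an⁻¹ := inv_pos.mpr hpos
  have han : 1 < an := one_lt_of_two_mul_inv_add_eq hpos
    (Finset.sum_nonneg fun i _ => (pow_pos hinv i).le) heq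
  have hinv_lt : an⁻¹ < 1 := inv_lt_one_of_one_lt₀ han
  have hbal : an⁻¹ + ∑ i ∈ Finset.Icc 1 (n - 2), an⁻¹ ^ i = an := by
    rw [sum_Icc_one_pow_eq_add_sum_Icc_two (by omega)]
    linarith
  have hgap : 2 * an⁻¹ - an⁻¹ ^ (n - 2) < 1 :=
    two_mul_sub_pow_lt_one hn hinv hinv_lt (by rwa [inv_inv])
  have hfeas : NLPFeasible n an⁻¹ an (1 + an) :=
    ⟨by linarith, by rw [inv_inv], le_rfl, hinv, hinv_lt, han, by linarith⟩
  refine ⟨IsGreatest.csSup_eq ⟨⟨_, _, hfeas⟩, ?_⟩, hfeas⟩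
  rintro ρ ⟨r, a, h⟩
  exact h.le_one_add hpos hbal

/-- For `n ∈ {3,4,5}`, the supremum of (NLP_n) equals `1 + aₙ`, where
`aₙ` is the unique positive real solution of `2a⁻¹ + ∑_{i=2}^{n-2} a^{-i} = a`; moreover
this supremum is attained at the feasible point `(r, a, ρ) = (aₙ⁻¹, aₙ, 1 + aₙ)`. -/
theorem nlp_value_small_n (n : ℕ) (hn : n = 3 ∨ n = 4 ∨ n = 5)
    (an : ℝ) (hpos : 0 < an)
    (heq : 2 * an⁻¹ + ∑ i ∈ Finset.Icc 2 (n - 2), an⁻¹ ^ i = an)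
    (huniq : ∀ b : ℝ, 0 < b → 2 * b⁻¹ + ∑ i ∈ Finset.Icc 2 (n - 2), b⁻¹ ^ i = b → b = an) :
    sSup {ρ : ℝ | ∃ r a : ℝ, NLPFeasible n r a ρ} = 1 + an ∧
      NLPFeasible n an⁻¹ an (1 + an) :=
  nlp_value_small_n_general n hn an hpos heq
end

section
/- For every integer n ≥ 6, the supremum of the optimization problem (NLP_n) equals 1 + a_n, where a_n is the unique positive real solution of the equation 1 − a^{-1} + a^{-(n-2)} + ∑_{i=1}^{n-2} a^{-i} = a (equivalently, 1 + a^{-2} + ⋯ + a^{-(n-3)} + 2a^{-(n-2)} = a); this supremum is approached by points with a = a_n, ρ = 1 + a_n and r tending to 1 − a_n^{-1} + a_n^{-(n-2)}. -/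
/-!
For fixed `a`, the last constraint bounds `r` by `1 - a⁻¹ + a^{-(n-2)}`, so every feasible `ρ`
stays below `1 + F(a⁻¹)` with `F(t) = 1 - t + t^{n-2} + ∑_{i=1}^{n-2} t^i`, and also below
`1 + a`. Since `F` is increasing and `aₙ = F(aₙ⁻¹)`, the two bounds cross at `a = aₙ`, giving
`ρ < 1 + aₙ`. Conversely, at `a = aₙ` and `r` just below its bound, the constraint
`ρ ≤ 1 + r⁻¹` is the only one left to check; it holds because `1 - x + x^{n-2} ≤ x` for
`x = aₙ⁻¹`. Eliminating the geometric sum from `x F(x) = 1` gives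
`x^{n-1}(2x - 1) = x³ - (1 - x)²`; comparing with `x⁵(2x - 1)` (this is where `n ≥ 6` enters)
forces `1/2 < x ≤ 1/√3`, and on that range the inequality follows.
-/

open scoped BigOperators

open Finset

/-- The function `F` above: `1 + edgeValue (n - 2) a⁻¹` is what the first constraint allows
when `r` reaches the bound `1 - a⁻¹ + a^{-(n-2)}` set by the last one. -/
noncomputable def edgeValue (m : ℕ) (t : ℝ) : ℝ :=
  1 - t + t ^ m + ∑ i ∈ Icc 1 m, t ^ i

lemma edgeValue_eq (m : ℕ) (hm : 1 ≤ m) (t : ℝ) :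
    edgeValue m t = 1 + t ^ m + ∑ i ∈ Icc 2 m, t ^ i := by
  have hIcc : Icc 1 m = insert 1 (Icc 2 m) := (insert_Icc_add_one_left_eq_Icc hm).symm
  rw [edgeValue, hIcc, sum_insert (by simp), pow_one]
  ring

lemma one_lt_edgeValue {m : ℕ} (hm : 1 ≤ m) {t : ℝ} (ht : 0 < t) : 1 < edgeValue m t := by
  rw [edgeValue_eq m hm]
  have : 0 ≤ ∑ i ∈ Icc 2 m, t ^ i := sum_nonneg fun i _ => by positivity
  linarith [pow_pos ht m]

lemma edgeValue_le_edgeValue {m : ℕ} (hm : 1 ≤ m) {s t : ℝ} (hs : 0 ≤ s) (hst : s ≤ t) :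
    edgeValue m s ≤ edgeValue m t := by
  rw [edgeValue_eq m hm, edgeValue_eq m hm]
  gcongr

lemma mul_pow_mul_two_mul_sub_one_of_mul_edgeValue_eq_one {m : ℕ} {x : ℝ}
    (h : x * edgeValue m x = 1) : x * x ^ m * (2 * x - 1) = x ^ 3 - (1 - x) ^ 2 := by
  have hgeom : (∑ i ∈ Icc 1 m, x ^ i) * (1 - x) = x - x * x ^ m := by
    rw [← Ico_add_one_right_eq_Icc, geom_sum_Ico_mul_neg x (by omega), pow_one, pow_succ']
  rw [edgeValue] at h
  linear_combination (x - 1) * h + x * hgeom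

lemma one_add_le_two_mul {x y : ℝ} (hx0 : 0 < x) (hx1 : x < 1) (hy : y ≤ x ^ 4)
    (h : x * y * (2 * x - 1) = x ^ 3 - (1 - x) ^ 2) : 1 + y ≤ 2 * x := by
  have hx_half : 1 / 2 < x := by
    by_contra! hx
    have : x * (2 * x - 1) * y ≥ x * (2 * x - 1) * x ^ 4 :=
      mul_le_mul_of_nonpos_left hy (mul_nonpos_of_nonneg_of_nonpos hx0.le (by linarith))
    nlinarith [pow_le_pow_left₀ hx0.le hx 3, pow_le_pow_left₀ hx0.le hx 5]
  have hx_third : 3 * x ^ 2 ≤ 1 := by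
    by_contra! hx
    have : x * (2 * x - 1) * y ≤ x * (2 * x - 1) * x ^ 4 :=
      mul_le_mul_of_nonneg_left hy (by nlinarith)
    -- `x³ - (1 - x)² - x⁵(2x - 1) = (1 - x)(2x⁵ + x⁴ + x³ + x - 1)`, and the second factor is
    -- positive once `x² > 1/3`.
    have hq : 0 < 2 * x ^ 5 + x ^ 4 + x ^ 3 + x - 1 := by
      nlinarith [sq_nonneg (x ^ 2 - 1 / 3)]
    nlinarith [mul_pos (sub_pos.2 hx1) hq]
  have hpos : 0 < x * (2 * x - 1) := by nlinarith
  have : x * (2 * x - 1) * y ≤ x * (2 * x - 1) * (2 * x - 1) := by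
    nlinarith [mul_nonneg (sub_nonneg.2 hx1.le) (sub_nonneg.2 hx_third)]
  linarith [le_of_mul_le_mul_left this hpos]

lemma one_sub_add_pow_le_of_mul_edgeValue_eq_one {m : ℕ} (hm : 4 ≤ m) {x : ℝ} (hx0 : 0 < x)
    (hx1 : x < 1) (h : x * edgeValue m x = 1) : 1 - x + x ^ m ≤ x := by
  have := one_add_le_two_mul hx0 hx1 (pow_le_pow_of_le_one hx0.le hx1.le hm)
    (mul_pow_mul_two_mul_sub_one_of_mul_edgeValue_eq_one h)
  linarith

lemma NLPFeasible.lt_one_add_edgeValue {n : ℕ} {r a ρ : ℝ} (h : NLPFeasible n r a ρ) :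
    ρ < 1 + edgeValue (n - 2) a⁻¹ := by
  obtain ⟨h_sum, -, -, -, -, -, h_gap⟩ := h
  rw [edgeValue]
  linarith

lemma NLPFeasible.le_one_add_s13 {n : ℕ} (hn : 3 ≤ n) {b : ℝ} (hb : 0 < b)
    (hF : edgeValue (n - 2) b⁻¹ = b) {r a ρ : ℝ} (h : NLPFeasible n r a ρ) : ρ ≤ 1 + b := by
  rcases le_or_gt a b with hab | hba
  · linarith [h.2.2.1]
  · have := edgeValue_le_edgeValue (m := n - 2) (by omega) (inv_pos.2 (hb.trans hba)).le
      (inv_anti₀ hb hba.le)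
    linarith [h.lt_one_add_edgeValue]

lemma exists_nlpFeasible_near {n : ℕ} (hn : 6 ≤ n) {a : ℝ} (ha : 0 < a)
    (hF : edgeValue (n - 2) a⁻¹ = a) {ε : ℝ} (hε : 0 < ε) :
    ∃ δ, 0 < δ ∧ δ < ε ∧ NLPFeasible n (1 - a⁻¹ + a⁻¹ ^ (n - 2) - δ) a (1 + a - δ) := by
  set r₀ := 1 - a⁻¹ + a⁻¹ ^ (n - 2) with hr₀_def
  have ha1 : 1 < a := hF ▸ one_lt_edgeValue (by omega) (inv_pos.2 ha)
  have hx1 : a⁻¹ < 1 := inv_lt_one_of_one_lt₀ ha1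
  have hr₀ : r₀ ≤ a⁻¹ :=
    one_sub_add_pow_le_of_mul_edgeValue_eq_one (by omega) (inv_pos.2 ha) hx1
      (by rw [hF, inv_mul_cancel₀ ha.ne'])
  have hr₀pos : 0 < r₀ := by linarith [pow_pos (inv_pos.2 ha) (n - 2)]
  obtain ⟨δ, hδ0, hδε, hδr₀⟩ : ∃ δ, 0 < δ ∧ δ < ε ∧ δ < r₀ :=
    ⟨min ε r₀ / 2, by positivity, by linarith [min_le_left ε r₀], by linarith [min_le_right ε r₀]⟩
  refine ⟨δ, hδ0, hδε, ?_⟩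
  have hr : r₀ - δ < a⁻¹ := by linarith
  have hinv : a < (r₀ - δ)⁻¹ := lt_inv_of_lt_inv₀ (by linarith) hr
  refine ⟨?_, by linarith, by linarith, by linarith, by linarith, ha1, by linarith⟩
  rw [edgeValue] at hF
  linarith

theorem nlp_value_large_n_general (n : ℕ) (hn : 6 ≤ n)
    (an : ℝ) (hpos : 0 < an)
    (heq : 1 - an⁻¹ + an⁻¹ ^ (n - 2) + ∑ i ∈ Finset.Icc 1 (n - 2), an⁻¹ ^ i = an) :
    sSup {ρ : ℝ | ∃ r a : ℝ, NLPFeasible n r a ρ} = 1 + an ∧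
      ∀ ε : ℝ, 0 < ε → ∃ r ρ : ℝ, NLPFeasible n r an ρ ∧
        |ρ - (1 + an)| < ε ∧ |r - (1 - an⁻¹ + an⁻¹ ^ (n - 2))| < ε := by
  have hF : edgeValue (n - 2) an⁻¹ = an := heq
  refine ⟨?_, fun ε hε => ?_⟩
  · obtain ⟨δ, -, -, hδ⟩ := exists_nlpFeasible_near hn hpos hF one_pos
    refine csSup_eq_of_forall_le_of_forall_lt_exists_gt ⟨_, _, _, hδ⟩
      (fun ρ ⟨r, a, h⟩ => h.le_one_add_s13 (by omega) hpos hF) fun w hw => ?_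
    obtain ⟨δ, -, hδε, hδ⟩ := exists_nlpFeasible_near hn hpos hF (sub_pos.2 hw)
    exact ⟨_, ⟨_, _, hδ⟩, by linarith⟩
  · obtain ⟨δ, hδ0, hδε, hδ⟩ := exists_nlpFeasible_near hn hpos hF hε
    refine ⟨_, _, hδ, ?_, ?_⟩ <;> rw [abs_lt] <;> constructor <;> linarith

/-- For every integer `n ≥ 6`, the supremum of (NLP_n) equals `1 + aₙ`,
where `aₙ` is the unique positive real solution of
`1 - a⁻¹ + a^{-(n-2)} + ∑_{i=1}^{n-2} a^{-i} = a`; this supremum is approached by feasible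
points with `a = aₙ`, `ρ` tending to `1 + aₙ` and `r` tending to `1 - aₙ⁻¹ + aₙ^{-(n-2)}`. -/
theorem nlp_value_large_n (n : ℕ) (hn : 6 ≤ n)
    (an : ℝ) (hpos : 0 < an)
    (heq : 1 - an⁻¹ + an⁻¹ ^ (n - 2) + ∑ i ∈ Finset.Icc 1 (n - 2), an⁻¹ ^ i = an)
    (huniq : ∀ b : ℝ, 0 < b →
      1 - b⁻¹ + b⁻¹ ^ (n - 2) + ∑ i ∈ Finset.Icc 1 (n - 2), b⁻¹ ^ i = b → b = an) :
    sSup {ρ : ℝ | ∃ r a : ℝ, NLPFeasible n r a ρ} = 1 + an ∧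
      ∀ ε : ℝ, 0 < ε → ∃ r ρ : ℝ, NLPFeasible n r an ρ ∧
        |ρ - (1 + an)| < ε ∧ |r - (1 - an⁻¹ + an⁻¹ ^ (n - 2))| < ε :=
  nlp_value_large_n_general n hn an hpos heq
end

section
/- For every integer n ≥ 3, the relaxed problem (RP_n) attains its maximum, and every optimal solution (r, z, ρ) of (RP_n) satisfies ρ = 1 + z^{-1}. -/
open scoped BigOperators

/-- The feasibility predicate of the relaxed problem (RP_n): real variables `r, z, ρ`
subject to `ρ ≤ 1 + r + ∑_{i=1}^{n-2} z^i`, `ρ ≤ 1 + r⁻¹`, `ρ ≤ 1 + z⁻¹`, `0 ≤ r ≤ 1`,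
`0 ≤ z ≤ 1` and `r ≤ 1 - z + z^{n-2}`, where `r⁻¹` (resp. `z⁻¹`) is interpreted as `+∞`
when `r = 0` (resp. `z = 0`), i.e. the corresponding constraint is vacuous in that case. -/
def RPFeasible (n : ℕ) (r z ρ : ℝ) : Prop :=
  ρ ≤ 1 + r + ∑ i ∈ Finset.Icc 1 (n - 2), z ^ i ∧
  (0 < r → ρ ≤ 1 + r⁻¹) ∧
  (0 < z → ρ ≤ 1 + z⁻¹) ∧
  0 ≤ r ∧ r ≤ 1 ∧ 0 ≤ z ∧ z ≤ 1 ∧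
  r ≤ 1 - z + z ^ (n - 2)

/-!
Writing `0 < x → ρ ≤ 1 + x⁻¹` as `x * ρ ≤ x + 1` makes the feasible set closed; cut by `0 ≤ ρ`
it is compact, so `ρ` attains its maximum. If a feasible point with `ρ ≥ 2` has
`z * ρ < z + 1`, then raising `z` to `(z + 1) / ρ` and lowering `r` suitably keeps the point
feasible and makes every upper bound on `ρ` strict, so `ρ` can be increased. At `(1, 0, 2)`
this shows that the optimum is at least `2`, and at an optimum it forces `z * ρ = z + 1`.
-/

open Filter Topology Finset

theorem imp_le_one_add_inv_iff {x ρ : ℝ} (hx : 0 ≤ x) :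
    (0 < x → ρ ≤ 1 + x⁻¹) ↔ x * ρ ≤ x + 1 := by
  rcases hx.eq_or_lt with rfl | hx
  · simp
  · simp only [hx, forall_const]
    rw [← mul_le_mul_iff_of_pos_left hx, mul_add, mul_inv_cancel₀ hx.ne', mul_one]

theorem sub_le_sum_Icc_pow_sub_sum_Icc_pow {R : Type*} [CommRing R] [PartialOrder R]
    [IsOrderedRing R] {m : ℕ} (hm : 1 ≤ m) {a b : R} (ha : 0 ≤ a) (hab : a ≤ b) :
    b - a ≤ ∑ i ∈ Icc 1 m, b ^ i - ∑ i ∈ Icc 1 m, a ^ i := by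
  rw [← sum_sub_distrib]
  simpa using single_le_sum (f := fun i => b ^ i - a ^ i)
    (fun i _ => sub_nonneg.2 (pow_le_pow_left₀ ha hab i)) (mem_Icc.2 ⟨le_rfl, hm⟩)

theorem sum_Icc_pow_le_of_le_one {R : Type*} [CommSemiring R] [PartialOrder R]
    [IsOrderedRing R] (m : ℕ) {z : R} (hz₀ : 0 ≤ z) (hz₁ : z ≤ 1) : ∑ i ∈ Icc 1 m, z ^ i ≤ m := by
  simpa using sum_le_card_nsmul (Icc 1 m) (z ^ ·) 1 fun i _ => pow_le_one₀ hz₀ hz₁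

theorem rpFeasible_iff {n : ℕ} {r z ρ : ℝ} :
    RPFeasible n r z ρ ↔ ρ ≤ 1 + r + ∑ i ∈ Icc 1 (n - 2), z ^ i ∧ r * ρ ≤ r + 1 ∧
      z * ρ ≤ z + 1 ∧ 0 ≤ r ∧ r ≤ 1 ∧ 0 ≤ z ∧ z ≤ 1 ∧ r ≤ 1 - z + z ^ (n - 2) := by
  constructor
  · rintro ⟨hρ, hr, hz, hr₀, hr₁, hz₀, hz₁, hrz⟩
    exact ⟨hρ, (imp_le_one_add_inv_iff hr₀).1 hr, (imp_le_one_add_inv_iff hz₀).1 hz,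
      hr₀, hr₁, hz₀, hz₁, hrz⟩
  · rintro ⟨hρ, hr, hz, hr₀, hr₁, hz₀, hz₁, hrz⟩
    exact ⟨hρ, (imp_le_one_add_inv_iff hr₀).2 hr, (imp_le_one_add_inv_iff hz₀).2 hz,
      hr₀, hr₁, hz₀, hz₁, hrz⟩

theorem rpFeasible_one_zero_two (n : ℕ) : RPFeasible n 1 0 2 := by
  rw [rpFeasible_iff]
  refine ⟨?_, by norm_num, by norm_num, by norm_num, le_rfl, le_rfl, zero_le_one, ?_⟩
  · have : (0 : ℝ) ≤ ∑ i ∈ Icc 1 (n - 2), (0 : ℝ) ^ i := by positivity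
    linarith
  · have : (0 : ℝ) ≤ 0 ^ (n - 2) := by positivity
    linarith

theorem exists_gt_rpFeasible_of_lt {n : ℕ} {r z ρ : ℝ} (hr₀ : 0 ≤ r) (hr₁ : r ≤ 1)
    (hz₀ : 0 ≤ z) (hz₁ : z ≤ 1) (hrz : r ≤ 1 - z + z ^ (n - 2))
    (hρ : ρ < 1 + r + ∑ i ∈ Icc 1 (n - 2), z ^ i) (hr : r * ρ < r + 1) (hz : z * ρ < z + 1) :
    ∃ ρ' > ρ, RPFeasible n r z ρ' := by
  have hnear : ∀ᶠ ρ' in 𝓝 ρ, ρ' < 1 + r + ∑ i ∈ Icc 1 (n - 2), z ^ i ∧ r * ρ' < r + 1 ∧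
      z * ρ' < z + 1 :=
    (eventually_lt_nhds hρ).and <|
      (((continuous_const_mul r).tendsto ρ).eventually (eventually_lt_nhds hr)).and
      (((continuous_const_mul z).tendsto ρ).eventually (eventually_lt_nhds hz))
  obtain ⟨ρ', ⟨h₁, h₂, h₃⟩, hρ'⟩ :=
    ((hnear.filter_mono nhdsWithin_le_nhds).and self_mem_nhdsWithin :
      ∀ᶠ ρ' in 𝓝[>] ρ, _).exists
  exact ⟨ρ', hρ', rpFeasible_iff.2 ⟨h₁.le, h₂.le, h₃.le, hr₀, hr₁, hz₀, hz₁, hrz⟩⟩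

theorem RPFeasible.exists_gt_of_mul_lt {n : ℕ} (hn : 3 ≤ n) {r z ρ : ℝ}
    (h : RPFeasible n r z ρ) (hρ : 2 ≤ ρ) (hz : z * ρ < z + 1) :
    ∃ r' z' ρ', RPFeasible n r' z' ρ' ∧ ρ < ρ' := by
  obtain ⟨hρS, hr, -, hr₀, hr₁, hz₀, hz₁, hrz⟩ := rpFeasible_iff.1 h
  have hρ₀ : 0 < ρ := by linarith
  set z' := (z + 1) / ρ
  have hzz' : z < z' := by rw [lt_div_iff₀ hρ₀]; linarith
  have hz'₁ : z' ≤ 1 := by rw [div_le_one hρ₀]; linarith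
  have hz'ρ : z' * ρ = z + 1 := div_mul_cancel₀ _ hρ₀.ne'
  have hpow : z ^ (n - 2) < z' ^ (n - 2) := pow_lt_pow_left₀ hzz' hz₀ (by omega)
  have hS := sub_le_sum_Icc_pow_sub_sum_Icc_pow (m := n - 2) (by omega) hz₀ hzz'.le
  -- `a` is large enough to keep the last constraint, yet below the gain `z' - z` of the sum.
  set a := max (z' - z - (z' ^ (n - 2) - z ^ (n - 2))) ((z' - z) / 2)
  have ha₀ : 0 < a := lt_max_of_lt_right (by linarith)
  have haε : a < z' - z := max_lt (by linarith) (by linarith)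
  have hap : z' - z - (z' ^ (n - 2) - z ^ (n - 2)) ≤ a := le_max_left _ _
  set r' := max 0 (r - a)
  have hr' : r - a ≤ r' := le_max_right _ _
  have hr'ρ : r' * ρ < r' + 1 := by
    obtain h0 | h0 : r' = 0 ∨ r' = r - a := max_choice 0 (r - a)
    all_goals rw [h0]
    · simp
    · nlinarith
  obtain ⟨ρ', hρ', hfeas⟩ := exists_gt_rpFeasible_of_lt (n := n)
    (le_max_left _ _) (max_le zero_le_one (by linarith)) (by linarith) hz'₁
    (max_le (by linarith [pow_nonneg (hz₀.trans hzz'.le) (n - 2)]) (by linarith))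
    (by linarith) hr'ρ (by linarith)
  exact ⟨r', z', ρ', hfeas, hρ'⟩

theorem exists_rpFeasible_forall_le (n : ℕ) :
    ∃ r z ρ, RPFeasible n r z ρ ∧ ∀ r' z' ρ', RPFeasible n r' z' ρ' → ρ' ≤ ρ := by
  set K := {p : ℝ × ℝ × ℝ | RPFeasible n p.1 p.2.1 p.2.2 ∧ 0 ≤ p.2.2}
  have hK_closed : IsClosed K := by
    simp only [K, rpFeasible_iff]
    repeat' apply IsClosed.and
    all_goals exact isClosed_le (by fun_prop) (by fun_prop)
  have hK_bdd : K ⊆ Set.Icc (0, 0, 0) (1, 1, (n - 2 : ℕ) + 2) := by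
    rintro ⟨r, z, ρ⟩ ⟨⟨hρ, -, -, hr₀, hr₁, hz₀, hz₁, -⟩, hρ₀⟩
    have := sum_Icc_pow_le_of_le_one (n - 2) hz₀ hz₁
    exact ⟨⟨hr₀, hz₀, hρ₀⟩, hr₁, hz₁, by linarith⟩
  obtain ⟨⟨r, z, ρ⟩, ⟨hfeas, hρ₀⟩, hmax⟩ :=
    (isCompact_Icc.of_isClosed_subset hK_closed hK_bdd).exists_isMaxOn
      ⟨(1, 0, 2), rpFeasible_one_zero_two n, zero_le_two⟩
      (continuous_snd.comp continuous_snd).continuousOn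
  refine ⟨r, z, ρ, hfeas, fun r' z' ρ' h' => ?_⟩
  rcases le_or_gt 0 ρ' with hρ' | hρ'
  · exact hmax (show (r', z', ρ') ∈ K from ⟨h', hρ'⟩)
  · linarith

/-- For every integer `n ≥ 3`, the relaxed problem (RP_n) attains its
maximum, and every optimal solution `(r, z, ρ)` of (RP_n) satisfies `ρ = 1 + z⁻¹`
(in particular `z > 0`). -/
theorem rp_attains_max_and_last_constraint_tight (n : ℕ) (hn : 3 ≤ n) :
    (∃ r z ρ : ℝ, RPFeasible n r z ρ ∧
      ∀ r' z' ρ' : ℝ, RPFeasible n r' z' ρ' → ρ' ≤ ρ) ∧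
    (∀ r z ρ : ℝ, RPFeasible n r z ρ →
      (∀ r' z' ρ' : ℝ, RPFeasible n r' z' ρ' → ρ' ≤ ρ) →
      0 < z ∧ ρ = 1 + z⁻¹) := by
  refine ⟨exists_rpFeasible_forall_le n, fun r z ρ h hmax => ?_⟩
  have hρ : 2 ≤ ρ := by
    obtain ⟨_, _, ρ', h', hρ'⟩ :=
      (rpFeasible_one_zero_two n).exists_gt_of_mul_lt hn le_rfl (by norm_num)
    linarith [hmax _ _ _ h']
  obtain ⟨-, -, hz, -, -, hz_nonneg, -⟩ := rpFeasible_iff.1 h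
  have htight : z * ρ = z + 1 := by
    refine hz.antisymm (not_lt.1 fun hlt => ?_)
    obtain ⟨_, _, ρ', h', hρ'⟩ := h.exists_gt_of_mul_lt hn hρ hlt
    exact (hmax _ _ _ h').not_gt hρ'
  have hz_pos : 0 < z := hz_nonneg.lt_of_ne (by rintro rfl; simp at htight)
  refine ⟨hz_pos, ?_⟩
  field_simp
  linarith
end

section
/- For each integer n ≥ 3, let a_{n,1} be the unique positive real solution of a = 2a^{-1} + ∑_{i=2}^{n-2} a^{-i}, and let a_{n,2} be the unique positive real solution of a = 1 − a^{-1} + a^{-(n-2)} + ∑_{i=1}^{n-2} a^{-i}. Then: (i) both sequences (a_{n,1})_{n≥3} and (a_{n,2})_{n≥3} are increasing in n; (ii) a_{n,2} < 2 for every n ≥ 3; and (iii) a_{n,2} converges, as n → ∞, to the unique real solution a_∞ of a³ − 2a² + a − 1 = 0 (equivalently, of a = 1 + 1/(a(a−1))). -/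
/-!
Both equations read `a = φ(a)` with `φ` decreasing on `(0, ∞)`, so the fixed point lies to the
right of every `x` with `x < φ(x)` and to the left of every `x` with `φ(x) < x`. Passing from `n`
to `n + 1` increases `φ` at `a_n` (for the second equation because `a_n < 2`, which holds since
`φ(2) = 3/2` there). Summing the geometric series turns the second equation into
`a³ - 2a² + a - 1 = a · a^{-(n-2)} · (a - 2)`; as `a_n` increases to a limit in `(1, 2]`, the right
side tends to `0`, so the limit is a root of the cubic.
-/

open Finset Filter Topology

section FixedPoint

variable {α : Type*} [LinearOrder α] {g : α → α} {s : Set α} {x y : α}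

theorem AntitoneOn.lt_of_lt_apply_of_apply_eq (hg : AntitoneOn g s) (hx : x ∈ s) (hy : y ∈ s)
    (hxg : x < g x) (hgy : g y = y) : x < y := by
  by_contra! hyx
  exact (hxg.trans_le (hg hy hx hyx)).not_ge (hgy.le.trans hyx)

theorem AntitoneOn.lt_of_apply_lt_of_apply_eq (hg : AntitoneOn g s) (hx : x ∈ s) (hy : y ∈ s)
    (hgx : g x < x) (hgy : g y = y) : y < x := by
  by_contra! hxy
  exact (hgx.trans_le (hxy.trans hgy.ge)).not_ge (hg hx hy hxy)

end FixedPoint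

theorem geom_sum_Icc_mul_neg {R : Type*} [Ring R] (r : R) {k m : ℕ} (hkm : k ≤ m + 1) :
    (∑ i ∈ Icc k m, r ^ i) * (1 - r) = r ^ k - r ^ (m + 1) := by
  rw [← Ico_add_one_right_eq_Icc, geom_sum_Ico_mul_neg r hkm]

noncomputable def rhs₁ (m : ℕ) (a : ℝ) : ℝ := 2 * a⁻¹ + ∑ i ∈ Icc 2 m, a⁻¹ ^ i

/-- The right-hand side of the second equation with `-a⁻¹` cancelled against the `i = 1` term
of the sum (see `rhs₂_eq`), which makes it visibly decreasing in `a`. -/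
noncomputable def rhs₂ (m : ℕ) (a : ℝ) : ℝ := 1 + a⁻¹ ^ m + ∑ i ∈ Icc 2 m, a⁻¹ ^ i

theorem rhs₂_eq {m : ℕ} (hm : 1 ≤ m) (a : ℝ) :
    1 - a⁻¹ + a⁻¹ ^ m + ∑ i ∈ Icc 1 m, a⁻¹ ^ i = rhs₂ m a := by
  rw [rhs₂, ← insert_Icc_add_one_left_eq_Icc hm, sum_insert (by simp), pow_one]
  abel

theorem antitoneOn_rhs₁ (m : ℕ) : AntitoneOn (rhs₁ m) (Set.Ioi 0) := by
  intro a (ha : 0 < a) b _ hab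
  have hb : 0 < b := ha.trans_le hab
  unfold rhs₁
  gcongr

theorem antitoneOn_rhs₂ (m : ℕ) : AntitoneOn (rhs₂ m) (Set.Ioi 0) := by
  intro a (ha : 0 < a) b _ hab
  have hb : 0 < b := ha.trans_le hab
  unfold rhs₂
  gcongr

theorem rhs₁_lt_rhs₁_succ {m : ℕ} {a : ℝ} (hm : 1 ≤ m) (ha : 0 < a) :
    rhs₁ m a < rhs₁ (m + 1) a := by
  rw [rhs₁, rhs₁, sum_Icc_succ_top (by omega)]
  have hpos : 0 < a⁻¹ ^ (m + 1) := by positivity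
  linarith

theorem rhs₂_lt_rhs₂_succ {m : ℕ} {a : ℝ} (hm : 1 ≤ m) (ha₀ : 0 < a) (ha₂ : a < 2) :
    rhs₂ m a < rhs₂ (m + 1) a := by
  rw [rhs₂, rhs₂, sum_Icc_succ_top (by omega)]
  have hlast : a⁻¹ ^ m < 2 * a⁻¹ ^ (m + 1) := by
    have htwo : 1 < 2 * a⁻¹ := by rw [← div_eq_mul_inv, one_lt_div ha₀]; exact ha₂
    calc a⁻¹ ^ m = a⁻¹ ^ m * 1 := (mul_one _).symm
      _ < a⁻¹ ^ m * (2 * a⁻¹) := by gcongr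
      _ = 2 * a⁻¹ ^ (m + 1) := by ring
  linarith

theorem rhs₂_two {m : ℕ} (hm : 1 ≤ m) : rhs₂ m 2 = 3 / 2 := by
  have h := geom_sum_Icc_mul_neg (2⁻¹ : ℝ) (k := 2) (m := m) (by omega)
  rw [rhs₂]
  norm_num [pow_succ] at h ⊢
  linarith

theorem cubic_eq_of_rhs₂_eq {m : ℕ} {a : ℝ} (hm : 1 ≤ m) (ha : a ≠ 0) (hfix : rhs₂ m a = a) :
    a ^ 3 - 2 * a ^ 2 + a - 1 = a * a⁻¹ ^ m * (a - 2) := by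
  have hgeom := geom_sum_Icc_mul_neg a⁻¹ (k := 2) (m := m) (by omega)
  have hinv : a * a⁻¹ = 1 := mul_inv_cancel₀ ha
  rw [rhs₂] at hfix
  linear_combination -(a ^ 2 - a) * hfix + a ^ 2 * hgeom
    + (a * ∑ i ∈ Icc 2 m, a⁻¹ ^ i + a * a⁻¹ + 1 - a * a⁻¹ ^ m) * hinv

theorem tendsto_inv_pow_nhds_zero_of_one_lt_le {ι : Type*} {l : Filter ι} {b : ι → ℝ} {k : ι → ℕ}
    {c : ℝ} (hc : 1 < c) (hcb : ∀ i, c ≤ b i) (hk : Tendsto k l atTop) :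
    Tendsto (fun i => (b i)⁻¹ ^ k i) l (𝓝 0) := by
  have hc₀ : 0 < c := zero_lt_one.trans hc
  have hb₀ (i : ι) : 0 < b i := hc₀.trans_le (hcb i)
  refine squeeze_zero (fun i => by have := hb₀ i; positivity)
    (fun i => pow_le_pow_left₀ (inv_nonneg.2 (hb₀ i).le) (inv_anti₀ hc₀ (hcb i)) _) ?_
  exact (tendsto_pow_atTop_nhds_zero_of_lt_one (inv_nonneg.2 hc₀.le)
    (inv_lt_one_of_one_lt₀ hc)).comp hk

theorem exists_cubic_root_tendsto_of_rhs₂_eq {b : ℕ → ℝ} (hmono : Monotone b) (hb₁ : 1 < b 0)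
    (hb₂ : ∀ m, b m < 2) (hfix : ∀ m, rhs₂ (m + 1) (b m) = b m) :
    ∃ L, L ^ 3 - 2 * L ^ 2 + L - 1 = 0 ∧ Tendsto b atTop (𝓝 L) := by
  obtain ⟨L, hL⟩ : ∃ L, Tendsto b atTop (𝓝 L) :=
    ⟨_, tendsto_atTop_ciSup hmono ⟨2, Set.forall_mem_range.2 fun m => (hb₂ m).le⟩⟩
  refine ⟨L, ?_, hL⟩
  have hcubic (m : ℕ) :
      b m ^ 3 - 2 * b m ^ 2 + b m - 1 = b m * (b m)⁻¹ ^ (m + 1) * (b m - 2) :=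
    cubic_eq_of_rhs₂_eq (by omega) (zero_lt_one.trans (hb₁.trans_le (hmono m.zero_le))).ne'
      (hfix m)
  have hsmall := tendsto_inv_pow_nhds_zero_of_one_lt_le hb₁ (fun m => hmono m.zero_le)
    (tendsto_add_atTop_nat 1)
  have h₁ := (((hL.pow 3).sub ((hL.pow 2).const_mul 2)).add hL).sub_const 1
  have h₂ := (hL.mul hsmall).mul (hL.sub_const 2)
  simp only [← hcubic, mul_zero, zero_mul] at h₂
  exact tendsto_nhds_unique h₁ h₂

theorem sequences_increasing_bounded_and_convergent_general (a1 a2 : ℕ → ℝ)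
    (h1gt : ∀ n, 3 ≤ n → 1 < a1 n)
    (h1eq : ∀ n, 3 ≤ n →
      a1 n = 2 * (a1 n)⁻¹ + ∑ i ∈ Finset.Icc 2 (n - 2), (a1 n)⁻¹ ^ i)
    (h2gt : ∀ n, 3 ≤ n → 1 < a2 n)
    (h2eq : ∀ n, 3 ≤ n →
      a2 n = 1 - (a2 n)⁻¹ + (a2 n)⁻¹ ^ (n - 2) + ∑ i ∈ Finset.Icc 1 (n - 2), (a2 n)⁻¹ ^ i)
    (ainf : ℝ)
    (hainfuniq : ∀ x : ℝ, x ^ 3 - 2 * x ^ 2 + x - 1 = 0 → x = ainf) :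
    (∀ n, 3 ≤ n → a1 n < a1 (n + 1) ∧ a2 n < a2 (n + 1)) ∧
    (∀ n, 3 ≤ n → a2 n < 2) ∧
    Filter.Tendsto a2 Filter.atTop (nhds ainf) := by
  -- `a_{k+3}` solves the equations with `n - 2 = k + 1`.
  have fix₁ (k : ℕ) : rhs₁ (k + 1) (a1 (k + 3)) = a1 (k + 3) := (h1eq (k + 3) (by omega)).symm
  have fix₂ (k : ℕ) : rhs₂ (k + 1) (a2 (k + 3)) = a2 (k + 3) :=
    (rhs₂_eq (by omega) _).symm.trans (h2eq (k + 3) (by omega)).symm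
  have pos₁ (k : ℕ) : 0 < a1 (k + 3) := zero_lt_one.trans (h1gt _ (by omega))
  have pos₂ (k : ℕ) : 0 < a2 (k + 3) := zero_lt_one.trans (h2gt _ (by omega))
  have lt_two (k : ℕ) : a2 (k + 3) < 2 :=
    (antitoneOn_rhs₂ (k + 1)).lt_of_apply_lt_of_apply_eq (Set.mem_Ioi.2 two_pos) (pos₂ k)
      (by norm_num [rhs₂_two]) (fix₂ k)
  have mono₁ (k : ℕ) : a1 (k + 3) < a1 (k + 4) :=
    (antitoneOn_rhs₁ (k + 2)).lt_of_lt_apply_of_apply_eq (pos₁ k) (pos₁ (k + 1))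
      ((fix₁ k).symm.trans_lt (rhs₁_lt_rhs₁_succ (by omega) (pos₁ k))) (fix₁ (k + 1))
  have mono₂ (k : ℕ) : a2 (k + 3) < a2 (k + 4) :=
    (antitoneOn_rhs₂ (k + 2)).lt_of_lt_apply_of_apply_eq (pos₂ k) (pos₂ (k + 1))
      ((fix₂ k).symm.trans_lt (rhs₂_lt_rhs₂_succ (by omega) (pos₂ k) (lt_two k))) (fix₂ (k + 1))
  obtain ⟨L, hL, hlim⟩ := exists_cubic_root_tendsto_of_rhs₂_eq
    (monotone_nat_of_le_succ fun k => (mono₂ k).le) (h2gt 3 le_rfl) lt_two fix₂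
  refine ⟨fun n hn => ?_, fun n hn => ?_, hainfuniq L hL ▸ (tendsto_add_atTop_iff_nat 3).1 hlim⟩
  all_goals obtain ⟨k, rfl⟩ := Nat.exists_eq_add_of_le' hn
  exacts [⟨mono₁ k, mono₂ k⟩, lt_two k]

/-- For each `n ≥ 3`, let `a1 n` be the unique positive real solution of
`a = 2a⁻¹ + ∑_{i=2}^{n-2} a^{-i}`, and `a2 n` the unique positive real solution of
`a = 1 - a⁻¹ + a^{-(n-2)} + ∑_{i=1}^{n-2} a^{-i}` (both lie in `(1,∞)`).  Then (i) both
sequences are increasing in `n`; (ii) `a2 n < 2` for every `n ≥ 3`; (iii) `a2 n` converges,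
as `n → ∞`, to the unique real solution `ainf` of `a³ - 2a² + a - 1 = 0`. -/
theorem sequences_increasing_bounded_and_convergent (a1 a2 : ℕ → ℝ)
    (h1gt : ∀ n, 3 ≤ n → 1 < a1 n)
    (h1eq : ∀ n, 3 ≤ n →
      a1 n = 2 * (a1 n)⁻¹ + ∑ i ∈ Finset.Icc 2 (n - 2), (a1 n)⁻¹ ^ i)
    (h1uniq : ∀ n, 3 ≤ n → ∀ b : ℝ, 0 < b →
      b = 2 * b⁻¹ + ∑ i ∈ Finset.Icc 2 (n - 2), b⁻¹ ^ i → b = a1 n)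
    (h2gt : ∀ n, 3 ≤ n → 1 < a2 n)
    (h2eq : ∀ n, 3 ≤ n →
      a2 n = 1 - (a2 n)⁻¹ + (a2 n)⁻¹ ^ (n - 2) + ∑ i ∈ Finset.Icc 1 (n - 2), (a2 n)⁻¹ ^ i)
    (h2uniq : ∀ n, 3 ≤ n → ∀ b : ℝ, 0 < b →
      b = 1 - b⁻¹ + b⁻¹ ^ (n - 2) + ∑ i ∈ Finset.Icc 1 (n - 2), b⁻¹ ^ i → b = a2 n)
    (ainf : ℝ) (hainf : ainf ^ 3 - 2 * ainf ^ 2 + ainf - 1 = 0)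
    (hainfuniq : ∀ x : ℝ, x ^ 3 - 2 * x ^ 2 + x - 1 = 0 → x = ainf) :
    (∀ n, 3 ≤ n → a1 n < a1 (n + 1) ∧ a2 n < a2 (n + 1)) ∧
    (∀ n, 3 ≤ n → a2 n < 2) ∧
    Filter.Tendsto a2 Filter.atTop (nhds ainf) :=
  sequences_increasing_bounded_and_convergent_general a1 a2 h1gt h1eq h2gt h2eq ainf hainfuniq
end
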